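/- arXiv:1804.04594 — 5 statements merged into one kernel-verified Lean document; each statement's English description precedes it below -/
import Mathlib

section
/- Let G be a finite group, K a normal subgroup of G, and x ∈ G an element whose order is coprime to |K|. Then the centralizer of the image of x in G/K equals the image of C_G(x)·K under the quotient map, i.e., C_{G/K}(xK) = C_G(x)K/K. -/
/-!
If `gK` centralizes `xK`, then `y = g x g⁻¹` lies in `xK` and has the order of `x`; it suffices
to find `k ∈ K` with `k y k⁻¹ = x`, since then `kg ∈ C_G(x)` and `kgK = gK`. Such a `k` exists
for every `y ∈ xK` of the same order as `x`. When `x` has order `p ^ a`, Sylow's theorem in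
`⟨x⟩K` conjugates `y` by an element of `K` into a `p`-subgroup containing `x`, and that
`p`-subgroup meets `K` trivially. In general write `|x| = p ^ a * v` with `p ∤ v`: first
conjugate the `p`-part `y ^ v` to `x ^ v`, then conjugate the `p'`-part `y ^ p ^ a` to
`x ^ p ^ a` inside the centralizer of `x ^ v`, by induction on the order.
-/

open Subgroup

theorem eq_of_pow_eq_pow_of_coprime {G : Type*} [Group G] {g h : G} {u v : ℕ} (huv : u.Coprime v)
    (hu : g ^ u = h ^ u) (hv : g ^ v = h ^ v) : g = h := by
  have bezout (a : G) : a = (a ^ u) ^ u.gcdA v * (a ^ v) ^ u.gcdB v := by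
    rw [← zpow_natCast, ← zpow_natCast, ← zpow_mul, ← zpow_mul, ← zpow_add, ← Nat.gcd_eq_gcd_ab,
      huv.gcd_eq_one, Nat.cast_one, zpow_one]
  rw [bezout g, bezout h, hu, hv]

theorem Nat.exists_prime_pow_mul_eq_of_ne_one {n : ℕ} (hn0 : n ≠ 0) (hn1 : n ≠ 1) :
    ∃ p a v, p.Prime ∧ p ∣ n ∧ p ^ a * v = n ∧ v < n ∧ (p ^ a).Coprime v := by
  have hp : n.minFac.Prime := Nat.minFac_prime hn1
  refine ⟨n.minFac, n.factorization n.minFac, _, hp, n.minFac_dvd, ordProj_mul_ordCompl_eq_self n _,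
    Nat.div_lt_self (Nat.pos_of_ne_zero hn0) (Nat.one_lt_pow ?_ hp.one_lt),
    (coprime_ordCompl hp hn0).pow_left _⟩
  exact (hp.factorization_pos_of_dvd hn0 n.minFac_dvd).ne'

theorem orderOf_pow_of_orderOf_eq_mul {G : Type*} [Monoid G] {x : G} {m k : ℕ} (hk : k ≠ 0)
    (hx : orderOf x = m * k) : orderOf (x ^ k) = m := by
  rw [orderOf_pow_of_dvd hk (hx ▸ dvd_mul_left k m), hx,
    Nat.mul_div_cancel _ (Nat.pos_of_ne_zero hk)]

theorem QuotientGroup.mk_conj_of_mem {G : Type*} [Group G] {K : Subgroup G} [K.Normal] {k : G}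
    (hk : k ∈ K) (y : G) : ((k * y * k⁻¹ : G) : G ⧸ K) = y := by
  simp [(QuotientGroup.eq_one_iff k).mpr hk]

theorem Subgroup.card_subgroupOf_dvd {G : Type*} [Group G] (H K : Subgroup G) :
    Nat.card (H.subgroupOf K) ∣ Nat.card H := by
  rw [← card_map_of_injective K.subtype_injective, subgroupOf_map_subtype]
  exact card_dvd_of_le inf_le_left

theorem Subgroup.exists_isPGroup_mem_conj_mem {G : Type*} [Group G] [Finite G] {p : ℕ}
    [Fact p.Prime] (M : Subgroup G) {x y : G} (hxM : x ∈ M) (hyM : y ∈ M) {a b : ℕ}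
    (hx : orderOf x = p ^ a) (hy : orderOf y = p ^ b) :
    ∃ S : Subgroup G, IsPGroup p S ∧ x ∈ S ∧ ∃ g ∈ M, g * y * g⁻¹ ∈ S := by
  have isPGroup_zpowers {z : M} {c : ℕ} (hz : orderOf (z : G) = p ^ c) :
      IsPGroup p (zpowers z) :=
    IsPGroup.of_card (by rw [Nat.card_zpowers, ← Subgroup.orderOf_coe, hz])
  obtain ⟨S, hS⟩ := (isPGroup_zpowers (z := ⟨x, hxM⟩) hx).exists_le_sylow
  obtain ⟨T, hT⟩ := (isPGroup_zpowers (z := ⟨y, hyM⟩) hy).exists_le_sylow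
  obtain ⟨g, rfl⟩ := MulAction.exists_smul_eq M T S
  refine ⟨((g • T : Sylow p M) : Subgroup M).map M.subtype, (g • T).isPGroup'.map _,
    ⟨⟨x, hxM⟩, hS (mem_zpowers _), rfl⟩, g, g.2, ⟨g * ⟨y, hyM⟩ * g⁻¹, ?_, rfl⟩⟩
  rw [Sylow.coe_subgroup_smul]
  exact smul_mem_pointwise_smul _ (MulAut.conj g) _ (hT (mem_zpowers _))

theorem exists_mem_conj_eq_of_orderOf_eq_prime_pow {G : Type*} [Group G] [Finite G] {p : ℕ}
    [Fact p.Prime] {K : Subgroup G} [K.Normal] (hpK : ¬ p ∣ Nat.card K) {x y : G} {a b : ℕ}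
    (hx : orderOf x = p ^ a) (hy : orderOf y = p ^ b) (hxy : (y : G ⧸ K) = x) :
    ∃ k ∈ K, k * y * k⁻¹ = x := by
  have hyM : y ∈ zpowers x ⊔ K :=
    mul_inv_cancel_left x y ▸ mul_mem_sup (mem_zpowers x) (QuotientGroup.eq.mp hxy.symm)
  obtain ⟨S, hS, hxS, g, hg, hgyS⟩ :=
    exists_isPGroup_mem_conj_mem _ (mem_sup_left (mem_zpowers x)) hyM hx hy
  obtain ⟨c, hc, k, hk, rfl⟩ := mem_sup_of_normal_right.mp hg
  have hcS : c ∈ S := zpowers_le.mpr hxS hc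
  have hkyS : k * y * k⁻¹ ∈ S := by
    convert S.mul_mem (S.mul_mem (S.inv_mem hcS) hgyS) hcS using 1
    group
  have hSK : Disjoint S K := by
    obtain ⟨n, hn⟩ := IsPGroup.iff_card.mp hS
    exact disjoint_of_coprime_natCard
      (hn ▸ ((Nat.Prime.coprime_iff_not_dvd Fact.out).mpr hpK).pow_left n)
  refine ⟨k, hk, inv_mul_eq_one.mp (disjoint_def.mp hSK (S.mul_mem (S.inv_mem hkyS) hxS) ?_)⟩
  rw [← QuotientGroup.eq, QuotientGroup.mk_conj_of_mem hk, hxy]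

theorem exists_mem_conj_eq_of_coprime {G : Type*} [Group G] [Finite G] {K : Subgroup G} [K.Normal]
    {x y : G} (hcop : (orderOf x).Coprime (Nat.card K)) (hord : orderOf y = orderOf x)
    (hxy : (y : G ⧸ K) = x) : ∃ k ∈ K, k * y * k⁻¹ = x := by
  obtain ⟨n, hn⟩ : ∃ n, orderOf x = n := ⟨_, rfl⟩
  induction n using Nat.strong_induction_on generalizing G with | _ n ih =>
  rw [hn] at hcop hord
  rcases eq_or_ne n 1 with rfl | hn1
  · refine ⟨1, K.one_mem, ?_⟩
    rw [orderOf_eq_one_iff.mp hn, orderOf_eq_one_iff.mp hord]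
    group
  have hn0 : n ≠ 0 := hn ▸ (orderOf_pos x).ne'
  obtain ⟨p, a, v, hp, hpn, rfl, hvn, huv⟩ := Nat.exists_prime_pow_mul_eq_of_ne_one hn0 hn1
  have := Fact.mk hp
  have hv0 : v ≠ 0 := right_ne_zero_of_mul hn0
  have hu0 : p ^ a ≠ 0 := left_ne_zero_of_mul hn0
  obtain ⟨k₁, hk₁, hk₁y⟩ := exists_mem_conj_eq_of_orderOf_eq_prime_pow (K := K)
    ((Nat.Prime.coprime_iff_not_dvd hp).mp (hcop.coprime_dvd_left hpn))
    (orderOf_pow_of_orderOf_eq_mul hv0 hn) (orderOf_pow_of_orderOf_eq_mul hv0 hord)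
    (by rw [QuotientGroup.mk_pow, QuotientGroup.mk_pow, hxy])
  set y₁ := k₁ * y * k₁⁻¹
  have hy₁v : y₁ ^ v = x ^ v := by rw [conj_pow, hk₁y]
  have hy₁n : orderOf y₁ = v * p ^ a := by
    rw [← (SemiconjBy.conj_mk k₁ y).orderOf_eq k₁, hord, mul_comm]
  have hy₁x : (y₁ : G ⧸ K) = x := (QuotientGroup.mk_conj_of_mem hk₁ y).trans hxy
  set C := centralizer {x ^ v}
  have hxC : x ∈ C := mem_centralizer_singleton_iff.mpr (pow_mul_comm' x v).symm
  have hy₁C : y₁ ∈ C := mem_centralizer_singleton_iff.mpr (hy₁v ▸ (pow_mul_comm' y₁ v).symm)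
  have hXv : orderOf (⟨x ^ p ^ a, pow_mem hxC _⟩ : C) = v := by
    rw [orderOf_mk, orderOf_pow_of_orderOf_eq_mul hu0 (hn.trans (mul_comm _ _))]
  obtain ⟨⟨k₂, hk₂C⟩, hk₂, hk₂y⟩ := ih v hvn (K := K.subgroupOf C)
    (y := ⟨y₁ ^ p ^ a, pow_mem hy₁C _⟩)
    (hXv ▸ (hcop.coprime_dvd_left (dvd_mul_left v _)).coprime_dvd_right (card_subgroupOf_dvd K C))
    (by rw [hXv, orderOf_mk, orderOf_pow_of_orderOf_eq_mul hu0 hy₁n])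
    (by rw [QuotientGroup.eq, mem_subgroupOf]
        simpa [← QuotientGroup.eq, QuotientGroup.mk_pow] using congrArg (· ^ p ^ a) hy₁x)
    hXv
  refine ⟨k₂ * k₁, K.mul_mem (mem_subgroupOf.mp hk₂) hk₁, ?_⟩
  rw [show (k₂ * k₁ : G) * y * (k₂ * k₁)⁻¹ = k₂ * y₁ * k₂⁻¹ by simp only [y₁]; group]
  refine eq_of_pow_eq_pow_of_coprime huv ?_ ?_
  · rw [conj_pow]; exact congrArg Subtype.val hk₂y
  · rw [conj_pow, hy₁v, mem_centralizer_singleton_iff.mp hk₂C, mul_inv_cancel_right]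

theorem stmt_3 {G : Type*} [Group G] [Finite G] (K : Subgroup G) [K.Normal] (x : G)
    (hcop : Nat.Coprime (orderOf x) (Nat.card K)) :
    Subgroup.centralizer {(QuotientGroup.mk x : G ⧸ K)} =
      Subgroup.map (QuotientGroup.mk' K) (Subgroup.centralizer {x} ⊔ K) := by
  refine le_antisymm (fun q hq => ?_) ?_
  · obtain ⟨g, rfl⟩ := QuotientGroup.mk_surjective q
    have hgx : ((g * x * g⁻¹ : G) : G ⧸ K) = x := by
      rw [QuotientGroup.mk_mul, QuotientGroup.mk_mul, mem_centralizer_singleton_iff.mp hq,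
        QuotientGroup.mk_inv, mul_inv_cancel_right]
    obtain ⟨k, hk, hkx⟩ := exists_mem_conj_eq_of_coprime hcop
      ((SemiconjBy.conj_mk g x).orderOf_eq g).symm hgx
    refine ⟨k * g, mem_sup_left (mem_centralizer_singleton_iff.mpr ?_), ?_⟩
    · nth_rewrite 2 [← hkx]
      group
    · simp [(QuotientGroup.eq_one_iff k).mpr hk]
  · rw [Subgroup.map_sup, QuotientGroup.map_mk'_self, sup_bot_eq]
    exact (map_centralizer_le_centralizer_image _ _).trans (by simp)
end

section
/- Let G be a finite group and g ∈ G. If every conjugacy class of G contains an element h such that g commutes with h (equivalently, g ∈ C_G(h)), then g is in the center of G. -/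
/-!
Every element of `G` is conjugate into the centralizer `H` of `g`, that is, every element fixes a
point of `G ⧸ H`. By Burnside's lemma a transitive action of a finite group on at least two points
has a fixed-point-free element (Jordan), so `G ⧸ H` is a single point and `H = G`.
-/

open MulAction in
theorem MulAction.exists_fixedBy_eq_empty {G X : Type*} [Group G] [MulAction G X] [Finite G]
    [Finite X] [IsPretransitive G X] [Nontrivial X] : ∃ g : G, fixedBy X g = ∅ := by
  classical
  cases nonempty_fintype G
  cases nonempty_fintype X
  by_contra! hfix
  have hrest := Finset.card_nsmul_le_sum (Finset.univ.erase (1 : G))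
    (fun g => Fintype.card (fixedBy X g)) 1 fun g _ => Fintype.card_pos_iff.mpr (hfix g).to_subtype
  rw [Finset.card_erase_of_mem (Finset.mem_univ 1), Finset.card_univ, smul_eq_mul, mul_one] at hrest
  obtain ⟨_⟩ := (pretransitive_iff_unique_quotient_of_nonempty G X).mp inferInstance
  have := Fintype.one_lt_card (α := X)
  have := Fintype.card_pos (α := G)
  refine lt_irrefl (Fintype.card G) ?_
  calc Fintype.card G
    _ < Fintype.card (fixedBy X (1 : G)) +
          ∑ g ∈ Finset.univ.erase (1 : G), Fintype.card (fixedBy X g) := by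
      simp only [fixedBy_one_eq_univ, Fintype.card_setUniv]
      omega
    _ = ∑ g : G, Fintype.card (fixedBy X g) :=
      Finset.add_sum_erase _ (fun g => Fintype.card (fixedBy X g)) (Finset.mem_univ 1)
    _ = Fintype.card G := by
      rw [sum_card_fixedBy_eq_card_orbits_mul_card_group, Fintype.card_unique, one_mul]

theorem QuotientGroup.smul_mk_eq_mk_iff {G : Type*} [Group G] {H : Subgroup G} {g x : G} :
    g • (x : G ⧸ H) = x ↔ x⁻¹ * g * x ∈ H := by
  rw [MulAction.Quotient.smul_coe, smul_eq_mul, QuotientGroup.eq, ← H.inv_mem_iff]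
  simp [mul_assoc]

theorem Subgroup.eq_top_of_forall_isConj_mem {G : Type*} [Group G] [Finite G] (H : Subgroup G)
    (hH : ∀ g : G, ∃ k ∈ H, IsConj g k) : H = ⊤ := by
  by_contra hne
  have : Nontrivial (G ⧸ H) := QuotientGroup.nontrivial_iff.mpr hne
  obtain ⟨g, hg⟩ := MulAction.exists_fixedBy_eq_empty (G := G) (X := G ⧸ H)
  obtain ⟨k, hk, hgk⟩ := hH g
  obtain ⟨c, rfl⟩ := isConj_iff.mp hgk
  have hfixed : g • ((c⁻¹ : G) : G ⧸ H) = (c⁻¹ : G) := by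
    rwa [QuotientGroup.smul_mk_eq_mk_iff, inv_inv]
  exact (Set.eq_empty_iff_forall_notMem.mp hg) _ hfixed

theorem stmt_5 {G : Type*} [Group G] [Finite G] (g : G)
    (h : ∀ x : G, ∃ h : G, IsConj x h ∧ g * h = h * g) :
    g ∈ Subgroup.center G := by
  have hcentralizer : Subgroup.centralizer {g} = ⊤ := by
    refine (Subgroup.centralizer {g}).eq_top_of_forall_isConj_mem fun x => ?_
    obtain ⟨k, hxk, hgk⟩ := h x
    exact ⟨k, Subgroup.mem_centralizer_singleton_iff.mpr hgk.symm, hxk⟩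
  exact Set.singleton_subset_iff.mp (Subgroup.centralizer_eq_top_iff_subset.mp hcentralizer)
end

section
/- A finite group is generated by any set of representatives of its conjugacy classes: if S ⊆ G intersects every conjugacy class of G, then the subgroup generated by S is all of G. -/
/-!
If `H = closure S` were proper, every element of `G` would be conjugate into `H`, that is, would
fix a point of `G ⧸ H`. But a transitive action of a finite group on a set with at least two
points has a fixed-point-free element (Jordan): by Burnside's lemma the number of fixed points
averages to `1` over `G`, while the identity fixes more than one point.
-/

theorem MulAction.exists_forall_smul_ne_of_isPretransitive {G X : Type*} [Group G] [Finite G]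
    [MulAction G X] [IsPretransitive G X] [Nontrivial X] : ∃ g : G, ∀ x : X, g • x ≠ x := by
  classical
  obtain ⟨x₀⟩ : Nonempty X := inferInstance
  have : Finite X := Finite.of_surjective (· • x₀) (exists_smul_eq G x₀)
  cases nonempty_fintype G
  cases nonempty_fintype X
  by_contra! hfix
  have : Subsingleton (orbitRel.Quotient G X) :=
    (pretransitive_iff_subsingleton_quotient G X).1 ‹_›
  have : Unique (orbitRel.Quotient G X) := uniqueOfSubsingleton (Quotient.mk _ x₀)
  have hburnside := sum_card_fixedBy_eq_card_orbits_mul_card_group G X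
  rw [Fintype.card_unique, one_mul] at hburnside
  have hlt : ∑ _g : G, 1 < ∑ g : G, Fintype.card (fixedBy X g) := by
    refine Finset.sum_lt_sum (fun g _ => ?_) ⟨1, Finset.mem_univ _, ?_⟩
    · obtain ⟨x, hx⟩ := hfix g
      exact Fintype.card_pos_iff.mpr ⟨⟨x, hx⟩⟩
    · simpa [fixedBy_one_eq_univ] using Fintype.one_lt_card
  rw [hburnside, Finset.sum_const, Finset.card_univ, smul_eq_mul, mul_one] at hlt
  exact hlt.false

theorem Subgroup.exists_forall_not_isConj_of_ne_top {G : Type*} [Group G] [Finite G]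
    {H : Subgroup G} (hH : H ≠ ⊤) : ∃ g : G, ∀ h ∈ H, ¬IsConj g h := by
  have : Nontrivial (G ⧸ H) := QuotientGroup.nontrivial_iff.mpr hH
  obtain ⟨g, hg⟩ := MulAction.exists_forall_smul_ne_of_isPretransitive (G := G) (X := G ⧸ H)
  refine ⟨g, fun h hh hgh => ?_⟩
  obtain ⟨c, rfl⟩ := isConj_iff.mp hgh
  refine hg (c⁻¹ : G) (QuotientGroup.eq.mpr ?_)
  simpa [mul_assoc] using H.inv_mem hh

theorem stmt_6 {G : Type*} [Group G] [Finite G] (S : Set G)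
    (h : ∀ x : G, ∃ s ∈ S, IsConj x s) :
    Subgroup.closure S = ⊤ := by
  by_contra hne
  obtain ⟨g, hg⟩ := Subgroup.exists_forall_not_isConj_of_ne_top hne
  obtain ⟨s, hs, hgs⟩ := h g
  exact hg s (Subgroup.subset_closure hs) hgs
end

section
/- Let G be a finite Frobenius group with kernel A and complement B. If |B| is even, then A is abelian. -/
/-! An involution `t` of the complement acts on the kernel `A` by conjugation without nontrivial
fixed points. For finite `A` this makes `a ↦ a⁻¹ (t a t⁻¹)` injective, hence surjective, and since
`t² = 1` conjugation by `t` then inverts every element of `A`. A group on which inversion is an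
automorphism is abelian. -/

open MonoidHom

namespace MulAut

variable {G : Type*} [Group G] {A : Subgroup G} [A.Normal]

theorem fixedPointFree_conjNormal {t : G} (hfree : ∀ a ∈ A, t * a * t⁻¹ = a → a = 1) :
    FixedPointFree (conjNormal t : A ≃* A) := fun a ha ↦
  Subtype.ext <| hfree a a.2 <| by rw [← conjNormal_apply, ha]

theorem involutive_conjNormal {t : G} (ht : t ^ 2 = 1) :
    Function.Involutive (conjNormal t : A ≃* A) := fun a ↦ by
  rw [← mul_apply, ← map_mul, ← sq, ht, map_one, one_apply]

end MulAut

theorem Subgroup.commute_of_conj_fixedPointFree_of_sq_eq_one {G : Type*} [Group G]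
    {A : Subgroup G} [A.Normal] [Finite A] {t : G} (ht : t ^ 2 = 1)
    (hfree : ∀ a ∈ A, t * a * t⁻¹ = a → a = 1) {a b : G} (ha : a ∈ A) (hb : b ∈ A) :
    Commute a b := by
  have := (MulAut.fixedPointFree_conjNormal hfree).commute_all_of_involutive
    (MulAut.involutive_conjNormal ht) ⟨a, ha⟩ ⟨b, hb⟩
  exact Subtype.ext_iff.mp this

theorem exists_mem_sq_eq_one_ne_one_of_even_card {G : Type*} [Group G] {B : Subgroup G}
    [Finite B] (heven : Even (Nat.card B)) : ∃ t ∈ B, t ≠ 1 ∧ t ^ 2 = 1 := by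
  obtain ⟨t, ht⟩ := exists_prime_orderOf_dvd_card' 2 heven.two_dvd
  rw [← Subgroup.orderOf_coe] at ht
  refine ⟨t, t.2, fun h ↦ by simp [h] at ht, ?_⟩
  rw [← ht, pow_orderOf_eq_one]

theorem stmt_8_general {G : Type*} [Group G] [Finite G] (A B : Subgroup G) [A.Normal]
    (hfree : ∀ b ∈ B, b ≠ 1 → ∀ a ∈ A, b * a * b⁻¹ = a → a = 1)
    (heven : Even (Nat.card B)) :
    ∀ a ∈ A, ∀ b ∈ A, a * b = b * a := by
  obtain ⟨t, htB, ht1, ht2⟩ := exists_mem_sq_eq_one_ne_one_of_even_card heven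
  exact fun a ha b hb ↦
    Subgroup.commute_of_conj_fixedPointFree_of_sq_eq_one ht2 (hfree t htB ht1) ha hb

theorem stmt_8 {G : Type*} [Group G] [Finite G] (A B : Subgroup G) [A.Normal]
    (hcompl : Subgroup.IsComplement' A B) (hA : A ≠ ⊥) (hB : B ≠ ⊥)
    (hfree : ∀ b ∈ B, b ≠ 1 → ∀ a ∈ A, b * a * b⁻¹ = a → a = 1)
    (heven : Even (Nat.card B)) :
    ∀ a ∈ A, ∀ b ∈ A, a * b = b * a :=
  stmt_8_general A B hfree heven
end

section
/- Let V be a finite abelian p-group and G a finite p'-group of automorphisms of V (p does not divide |G|). If V₁ is a G-invariant direct factor of V, then there exists a G-invariant subgroup V₂ of V with V = V₁ × V₂ (internal direct product). -/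
/-!
Average the projection onto `V₁` along `W` over `G`: `e = ∏ g, g ∘ π ∘ g⁻¹` commutes with `G`,
maps `V` into `V₁`, and acts on `V₁` as `v ↦ v ^ |G|`, which is bijective on the `p`-group `V₁`
because `p ∤ |G|`. Hence `ker e` is a `G`-invariant complement of `V₁`.
-/

namespace Subgroup

theorem isComplement'_ker_of_bijective_domRestrict {V : Type*} [Group V] {H : Subgroup V}
    (f : V →* H) (hf : Function.Bijective (f.domRestrict H)) : H.IsComplement' f.ker := by
  refine isComplement'_of_disjoint_and_mul_eq_univ ?_ ?_
  · refine disjoint_iff_inf_le.mpr fun v ⟨hvH, hvker⟩ => ?_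
    have : (⟨v, hvH⟩ : H) = 1 := hf.1 (by simpa using hvker)
    simpa using congrArg Subtype.val this
  · refine Set.eq_univ_of_forall fun v => ?_
    obtain ⟨u, hu⟩ := hf.2 (f v)
    refine ⟨u, u.2, (u : V)⁻¹ * v, ?_, mul_inv_cancel_left _ _⟩
    rw [SetLike.mem_coe, MonoidHom.mem_ker, map_mul, map_inv, ← hu, MonoidHom.domRestrict_apply,
      inv_mul_cancel]

variable {V : Type*} [CommGroup V] {H K : Subgroup V}

noncomputable def IsComplement'.projection (h : H.IsComplement' K) : V →* H :=
  h.QuotientMulEquiv.toMonoidHom.comp (QuotientGroup.mk' K)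

theorem IsComplement'.projection_apply_of_mem (h : H.IsComplement' K) {v : V} (hv : v ∈ H) :
    h.projection v = ⟨v, hv⟩ := by
  rw [projection, MonoidHom.comp_apply, MulEquiv.coe_toMonoidHom, ← MulEquiv.eq_symm_apply]
  rfl

end Subgroup

namespace MulAut

variable {G V : Type*} [Group G] [Fintype G] [CommGroup V] (φ : G →* MulAut V)

noncomputable def averageConj (f : V →* V) : V →* V :=
  ∏ g : G, (φ g).toMonoidHom.comp (f.comp (φ g⁻¹).toMonoidHom)

theorem averageConj_apply (f : V →* V) (v : V) :
    averageConj φ f v = ∏ g : G, φ g (f (φ g⁻¹ v)) := by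
  simp [averageConj, MonoidHom.finsetProd_apply]

theorem averageConj_apply_apply (f : V →* V) (h : G) (v : V) :
    averageConj φ f (φ h v) = φ h (averageConj φ f v) := by
  simp only [averageConj_apply, map_prod]
  refine (Fintype.prod_equiv (Equiv.mulLeft h) _ _ fun g => ?_).symm
  rw [Equiv.coe_mulLeft, mul_inv_rev, map_mul, map_mul, MulAut.mul_apply, MulAut.mul_apply,
    map_inv φ h, MulAut.inv_apply_self]

variable {φ} {H : Subgroup V} (hH : ∀ g : G, ∀ v ∈ H, φ g v ∈ H)
include hH

theorem averageConj_mem {f : V →* V} (hf : ∀ v, f v ∈ H) (v : V) : averageConj φ f v ∈ H := by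
  rw [averageConj_apply]
  exact H.prod_mem fun g _ => hH g _ (hf _)

theorem averageConj_apply_of_mem {f : V →* V} (hf : ∀ v ∈ H, f v = v) {v : V} (hv : v ∈ H) :
    averageConj φ f v = v ^ Nat.card G := by
  rw [averageConj_apply, Nat.card_eq_fintype_card, ← Finset.card_univ, ← Finset.prod_const]
  refine Finset.prod_congr rfl fun g _ => ?_
  rw [hf _ (hH _ _ hv), ← MulAut.mul_apply, ← map_mul, mul_inv_cancel, map_one, MulAut.one_apply]

end MulAut

theorem stmt_11_general {p : ℕ} (hp : p.Prime) {V : Type*} [CommGroup V]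
    (hV : IsPGroup p V) {G : Type*} [Group G] [Finite G] (hG : ¬ p ∣ Nat.card G)
    (φ : G →* MulAut V) (V₁ W : Subgroup V)
    (hinv : ∀ g : G, ∀ v ∈ V₁, φ g v ∈ V₁)
    (hcompl : Subgroup.IsComplement' V₁ W) :
    ∃ V₂ : Subgroup V, (∀ g : G, ∀ v ∈ V₂, φ g v ∈ V₂) ∧ Subgroup.IsComplement' V₁ V₂ := by
  have := Fintype.ofFinite G
  have := Fact.mk hp
  set π : V →* V := V₁.subtype.comp hcompl.projection
  have hπ_mem (v : V) : π v ∈ V₁ := (hcompl.projection v).2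
  have hπ_id (v : V) (hv : v ∈ V₁) : π v = v := by simp [π, hcompl.projection_apply_of_mem hv]
  set e : V →* V₁ := (MulAut.averageConj φ π).codRestrict V₁ (MulAut.averageConj_mem hinv hπ_mem)
  have he : ⇑(e.domRestrict V₁) = (hV.to_subgroup V₁).powEquiv' hG := by
    funext v
    exact Subtype.ext (MulAut.averageConj_apply_of_mem hinv hπ_id v.2)
  refine ⟨(MulAut.averageConj φ π).ker, fun g v hv => ?_, ?_⟩
  · rw [MonoidHom.mem_ker, MulAut.averageConj_apply_apply, hv, map_one]
  · rw [← MonoidHom.ker_codRestrict _ V₁ (MulAut.averageConj_mem hinv hπ_mem)]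
    exact Subgroup.isComplement'_ker_of_bijective_domRestrict e (he ▸ Equiv.bijective _)

theorem stmt_11 {p : ℕ} (hp : p.Prime) {V : Type*} [CommGroup V] [Finite V]
    (hV : IsPGroup p V) {G : Type*} [Group G] [Finite G] (hG : ¬ p ∣ Nat.card G)
    (φ : G →* MulAut V) (V₁ W : Subgroup V)
    (hinv : ∀ g : G, ∀ v ∈ V₁, φ g v ∈ V₁)
    (hcompl : Subgroup.IsComplement' V₁ W) :
    ∃ V₂ : Subgroup V, (∀ g : G, ∀ v ∈ V₂, φ g v ∈ V₂) ∧ Subgroup.IsComplement' V₁ V₂ :=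
  stmt_11_general hp hV hG φ V₁ W hinv hcompl
end
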